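/- arXiv:1509.03364 — 2 statements merged into one kernel-verified Lean document; each statement's English description precedes it below -/
import Mathlib

section
/- In the rank-9 lattice ℤL ⊕ 𝕃 (𝕃 the Nikulin lattice, L² = 14, H = L − M), there is no class D with D² = 0 and D·H = 3, and no class D with D² = 2 and D·H = 5. -/
/-!
Doubling a class clears the half-integral coefficient of `M`: if `D = aL + bM + ∑ cᵢNᵢ`, then
`2D = 2aL + ∑ dᵢNᵢ` with `dᵢ = b + 2cᵢ`. In these coordinates `∑ dᵢ = 2(D·H - 14a)` and
`∑ dᵢ² = 2(14a² - D²)`, so Cauchy–Schwarz over the eight `Nᵢ` gives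
`(D·H - 14a)² ≤ 4(14a² - D²)`. For `(D², D·H) = (0, 3)` this says `140a² - 84a + 9 ≤ 0`, and for
`(2, 5)` it says `140a² - 140a + 33 ≤ 0`; neither holds for an integer `a`, since `a ≤ a²`.
-/

section OrthogonalFrame

variable {Λ ι : Type*} [AddCommGroup Λ] [Fintype ι]
  (B : Λ →ₗ[ℤ] Λ →ₗ[ℤ] ℤ) {L : Λ} {N : ι → Λ}

lemma apply_smul_add_sum_smul_left (hNL : ∀ i, B (N i) L = 0) (x : ℤ) (d : ι → ℤ) :
    B (x • L + ∑ i, d i • N i) L = x * B L L := by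
  simp [hNL]

variable [DecidableEq ι]

lemma apply_smul_add_sum_smul_right (hLN : ∀ i, B L (N i) = 0)
    (hN : ∀ i j, B (N i) (N j) = if i = j then -2 else 0) (x : ℤ) (d : ι → ℤ) (j : ι) :
    B (x • L + ∑ i, d i • N i) (N j) = -2 * d j := by
  simp [hLN, hN, mul_comm]

lemma apply_smul_add_sum_smul_self (hLN : ∀ i, B L (N i) = 0) (hNL : ∀ i, B (N i) L = 0)
    (hN : ∀ i j, B (N i) (N j) = if i = j then -2 else 0) (x : ℤ) (d : ι → ℤ) :
    B (x • L + ∑ i, d i • N i) (x • L + ∑ i, d i • N i) = x ^ 2 * B L L - 2 * ∑ i, d i ^ 2 := by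
  set v := x • L + ∑ i, d i • N i
  calc B v (x • L + ∑ i, d i • N i) = x * B v L + ∑ i, d i * B v (N i) := by
        simp only [map_add (B v), map_smul, map_sum, smul_eq_mul]
    _ = x ^ 2 * B L L - 2 * ∑ i, d i ^ 2 := by
        simp only [v, apply_smul_add_sum_smul_left B hNL, apply_smul_add_sum_smul_right B hLN hN,
          mul_left_comm (d _), ← Finset.mul_sum, ← sq]
        ring

lemma sq_apply_smul_add_sum_smul_sum_le (hLN : ∀ i, B L (N i) = 0) (hNL : ∀ i, B (N i) L = 0)
    (hN : ∀ i j, B (N i) (N j) = if i = j then -2 else 0) (x : ℤ) (d : ι → ℤ) :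
    B (x • L + ∑ i, d i • N i) (∑ i, N i) ^ 2 ≤
      2 * Fintype.card ι * (x ^ 2 * B L L - B (x • L + ∑ i, d i • N i) (x • L + ∑ i, d i • N i)) := by
  rw [apply_smul_add_sum_smul_self B hLN hNL hN, map_sum]
  simp only [apply_smul_add_sum_smul_right B hLN hN, ← Finset.mul_sum]
  have hCS := sq_sum_le_card_mul_sum_sq (s := Finset.univ) (f := d)
  rw [Finset.card_univ] at hCS
  nlinarith

end OrthogonalFrame

lemma two_smul_smul_add_smul_add_sum_smul {Λ ι : Type*} [AddCommGroup Λ] [Fintype ι]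
    {L M : Λ} {N : ι → Λ} (hM : 2 • M = ∑ i, N i) (a b : ℤ) (c : ι → ℤ) :
    2 • (a • L + b • M + ∑ i, c i • N i) = (2 * a) • L + ∑ i, (b + 2 * c i) • N i := by
  rw [smul_add, smul_add, smul_comm 2 b M, hM, Finset.smul_sum, Finset.smul_sum]
  simp only [add_smul, Finset.sum_add_distrib, mul_smul, ofNat_zsmul, add_assoc]

lemma exists_sq_sub_le_of_nikulin {Λ : Type*} [AddCommGroup Λ] (B : Λ →ₗ[ℤ] Λ →ₗ[ℤ] ℤ)
    {L M : Λ} {N : Fin 8 → Λ} (hL : B L L = 14) (hLN : ∀ i, B L (N i) = 0)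
    (hNL : ∀ i, B (N i) L = 0) (hN : ∀ i j, B (N i) (N j) = if i = j then -2 else 0)
    (hM : 2 • M = ∑ i, N i)
    (hspan : ∀ D : Λ, ∃ (a b : ℤ) (c : Fin 8 → ℤ), D = a • L + b • M + ∑ i, c i • N i)
    (D : Λ) : ∃ a : ℤ, (B D (L - M) - 14 * a) ^ 2 ≤ 4 * (14 * a ^ 2 - B D D) := by
  obtain ⟨a, b, c, hD⟩ := hspan D
  have h2D := two_smul_smul_add_smul_add_sum_smul (L := L) hM a b c
  rw [← hD] at h2D
  have hDL := apply_smul_add_sum_smul_left B hNL (2 * a) fun i => b + 2 * c i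
  have hCS := sq_apply_smul_add_sum_smul_sum_le B hLN hNL hN (2 * a) fun i => b + 2 * c i
  rw [← h2D] at hCS hDL
  rw [← hM] at hCS
  simp only [map_nsmul, LinearMap.smul_apply, nsmul_eq_mul, Nat.cast_ofNat, Fintype.card_fin,
    hL] at hCS hDL
  refine ⟨a, ?_⟩
  rw [map_sub, show B D L = 14 * a by linarith]
  linarith

theorem nikulin_genus8_no_low_clifford_general (Λ : Type*) [AddCommGroup Λ]
    (B : Λ →ₗ[ℤ] Λ →ₗ[ℤ] ℤ)
    (hsymm : ∀ x y, B x y = B y x)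
    (L : Λ) (N : Fin 8 → Λ) (M H : Λ)
    (hL : B L L = 14)
    (hLN : ∀ i, B L (N i) = 0)
    (hN : ∀ i j, B (N i) (N j) = if i = j then -2 else 0)
    (hM : 2 • M = ∑ i, N i)
    (hH : H = L - M)
    (hspan : ∀ D : Λ, ∃ (a b : ℤ) (c : Fin 8 → ℤ),
      D = a • L + b • M + ∑ i, c i • N i) :
    (¬ ∃ D : Λ, B D D = 0 ∧ B D H = 3) ∧
      (¬ ∃ D : Λ, B D D = 2 ∧ B D H = 5) := by
  have hNL : ∀ i, B (N i) L = 0 := fun i => (hsymm _ _).trans (hLN i)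
  have bound := exists_sq_sub_le_of_nikulin B hL hLN hNL hN hM hspan
  subst hH
  constructor <;>
  · rintro ⟨D, hDD, hDH⟩
    obtain ⟨a, ha⟩ := bound D
    rw [hDD, hDH] at ha
    nlinarith [Int.le_self_sq a]

/-- In the rank-9 lattice `ℤL ⊕ 𝕃` (`𝕃` the Nikulin lattice, `L² = 14`, `H = L - M`),
there is no class `D` with `D² = 0, D·H = 3`, and none with `D² = 2, D·H = 5`. -/
theorem nikulin_genus8_no_low_clifford (Λ : Type*) [AddCommGroup Λ]
    (B : Λ →ₗ[ℤ] Λ →ₗ[ℤ] ℤ)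
    (hsymm : ∀ x y, B x y = B y x)
    (L : Λ) (N : Fin 8 → Λ) (M H : Λ)
    (hL : B L L = 14)
    (hLN : ∀ i, B L (N i) = 0)
    (hLM : B L M = 0)
    (hN : ∀ i j, B (N i) (N j) = if i = j then -2 else 0)
    (hM : 2 • M = ∑ i, N i)
    (hH : H = L - M)
    (hspan : ∀ D : Λ, ∃ (a b : ℤ) (c : Fin 8 → ℤ),
      D = a • L + b • M + ∑ i, c i • N i) :
    (¬ ∃ D : Λ, B D D = 0 ∧ B D H = 3) ∧
      (¬ ∃ D : Λ, B D D = 2 ∧ B D H = 5) :=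
  nikulin_genus8_no_low_clifford_general Λ B hsymm L N M H hL hLN hN hM hH hspan
end

section
/- In the rank-9 lattice ℤL ⊕ 𝕃 with L² = 14 and H = L − M, there is no class D with D² = 0 and D·H = 4. -/
/-!
Since `2M = ∑ Nᵢ`, doubling a class `D = aL + bM + ∑ cᵢNᵢ` gives `2D = 2aL + ∑ xᵢNᵢ` with
`xᵢ = b + 2cᵢ`, and likewise `2H = 2L - ∑ Nᵢ`. In these coordinates `D² = 0` and `D·H = 4` read
`∑ xᵢ² = 28a²` and `∑ xᵢ = 8 - 28a`. Cauchy–Schwarz then forces `(8 - 28a)² ≤ 8 · 28a²`, i.e.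
`35a² - 28a + 4 ≤ 0`, whose roots lie strictly between `0` and `1`.
-/

open Finset

section Gram

variable {Λ : Type*} [AddCommGroup Λ] {n : ℕ} (L : Λ) (N : Fin n → Λ)

theorem apply_smul_add_sum_smul_of_orthogonal (B : Λ →ₗ[ℤ] Λ →ₗ[ℤ] ℤ) (k : ℤ)
    (hLN : ∀ i, B L (N i) = 0) (hNL : ∀ i, B (N i) L = 0)
    (hN : ∀ i j, B (N i) (N j) = if i = j then k else 0)
    (a a' : ℤ) (x y : Fin n → ℤ) :
    B (a • L + ∑ i, x i • N i) (a' • L + ∑ i, y i • N i)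
      = a * a' * B L L + k * ∑ i, x i * y i := by
  simp only [map_add, map_smul, map_sum, LinearMap.add_apply, LinearMap.smul_apply,
    LinearMap.coe_sum, Finset.sum_apply, smul_eq_mul, hLN, hNL, hN, mul_ite, mul_zero,
    sum_ite_eq', mem_univ, if_true, sum_const_zero, add_zero, zero_add, mul_sum]
  congr 1
  · ring
  · exact sum_congr rfl fun i _ => by ring

variable {L N} {M : Λ} (hM : 2 • M = ∑ i, N i)
include hM

theorem two_nsmul_smul_add_smul_add_sum_smul (a b : ℤ) (c : Fin n → ℤ) :
    2 • (a • L + b • M + ∑ i, c i • N i) = (2 * a) • L + ∑ i, (b + 2 * c i) • N i := by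
  simp only [add_smul, sum_add_distrib, ← smul_sum, ← hM, mul_smul]
  rw [smul_comm b 2 M]
  module

theorem two_nsmul_sub_eq : 2 • (L - M) = (2 : ℤ) • L + ∑ i, (-1 : ℤ) • N i := by
  simp only [neg_one_smul, sum_neg_distrib, ← hM]
  module

end Gram

theorem not_sum_sq_eq_and_sum_eq (a : ℤ) (x : Fin 8 → ℤ) :
    ¬ (∑ i, x i ^ 2 = 28 * a ^ 2 ∧ ∑ i, x i = 8 - 28 * a) := by
  rintro ⟨hsq, hsum⟩
  have hcs := sq_sum_le_card_mul_sum_sq (s := univ) (f := x)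
  simp only [card_univ, Fintype.card_fin, Nat.cast_ofNat, hsq, hsum] at hcs
  rcases le_or_gt a 0 with ha | ha <;> nlinarith

theorem nikulin_genus8_no_D04_general (Λ : Type*) [AddCommGroup Λ]
    (B : Λ →ₗ[ℤ] Λ →ₗ[ℤ] ℤ)
    (hsymm : ∀ x y, B x y = B y x)
    (L : Λ) (N : Fin 8 → Λ) (M H : Λ)
    (hL : B L L = 14)
    (hLN : ∀ i, B L (N i) = 0)
    (hN : ∀ i j, B (N i) (N j) = if i = j then -2 else 0)
    (hM : 2 • M = ∑ i, N i)
    (hH : H = L - M)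
    (hspan : ∀ D : Λ, ∃ (a b : ℤ) (c : Fin 8 → ℤ),
      D = a • L + b • M + ∑ i, c i • N i) :
    ¬ ∃ D : Λ, B D D = 0 ∧ B D H = 4 := by
  rintro ⟨D, hDD, hDH⟩
  obtain ⟨a, b, c, rfl⟩ := hspan D
  subst hH
  have gram := apply_smul_add_sum_smul_of_orthogonal L N B (-2) hLN
    (fun i => (hsymm _ _).trans (hLN i)) hN
  have double : ∀ u v, B (2 • u) (2 • v) = 4 * B u v := fun u v => by
    simp only [map_nsmul, LinearMap.smul_apply]
    ring
  refine not_sum_sq_eq_and_sum_eq a (fun i => b + 2 * c i) ⟨?_, ?_⟩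
  · have h := double (a • L + b • M + ∑ i, c i • N i) (a • L + b • M + ∑ i, c i • N i)
    rw [two_nsmul_smul_add_smul_add_sum_smul hM, gram, hDD, hL] at h
    simp only [← sq] at h
    linarith
  · have h := double (a • L + b • M + ∑ i, c i • N i) (L - M)
    rw [two_nsmul_smul_add_smul_add_sum_smul hM, two_nsmul_sub_eq hM, gram, hDH, hL] at h
    simp only [mul_neg_one, sum_neg_distrib] at h
    linarith

/-- In the rank-9 lattice `ℤL ⊕ 𝕃` with `L² = 14` and `H = L - M`,
there is no class `D` with `D² = 0` and `D·H = 4`. -/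
theorem nikulin_genus8_no_D04 (Λ : Type*) [AddCommGroup Λ]
    (B : Λ →ₗ[ℤ] Λ →ₗ[ℤ] ℤ)
    (hsymm : ∀ x y, B x y = B y x)
    (L : Λ) (N : Fin 8 → Λ) (M H : Λ)
    (hL : B L L = 14)
    (hLN : ∀ i, B L (N i) = 0)
    (hLM : B L M = 0)
    (hN : ∀ i j, B (N i) (N j) = if i = j then -2 else 0)
    (hM : 2 • M = ∑ i, N i)
    (hH : H = L - M)
    (hspan : ∀ D : Λ, ∃ (a b : ℤ) (c : Fin 8 → ℤ),
      D = a • L + b • M + ∑ i, c i • N i) :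
    ¬ ∃ D : Λ, B D D = 0 ∧ B D H = 4 :=
  nikulin_genus8_no_D04_general Λ B hsymm L N M H hL hLN hN hM hH hspan
end
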